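/- Let $y_1, \dots, y_n \in \mathbb{R}$ and $\rho \in [0, 1/4]$. Let $w, w' \in \mathcal{W}_\rho$ be probability vectors with means $\mu = \sum_i w_i y_i$ and $\mu' = \sum_i w'_i y_i$, satisfying $\sum_i w_i (y_i - \mu)^2 \leq \sigma^2$ and $\sum_i w'_i (y_i - \mu')^2 \leq \sigma'^2$. Then $|\mu - \mu'| \leq 2\sqrt{\rho}(\sigma + \sigma')$. -/

import Mathlib

set_option maxHeartbeats 1000000

open Finset

/-- Cauchy–Schwarz style bound for nonnegative weights. -/
lemma cs_aux {n : ℕ} (s : Finset (Fin n)) (d v : Fin n → ℝ) (hd : ∀ i ∈ s, 0 ≤ d i) :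
    (∑ i ∈ s, d i * v i) ^ 2 ≤ (∑ i ∈ s, d i) * (∑ i ∈ s, d i * v i ^ 2) := by
  have h := Finset.sum_mul_sq_le_sq_mul_sq s (fun i => Real.sqrt (d i))
    (fun i => Real.sqrt (d i) * v i)
  have e1 : ∑ i ∈ s, Real.sqrt (d i) * (Real.sqrt (d i) * v i) = ∑ i ∈ s, d i * v i := by
    refine Finset.sum_congr rfl fun i hi => ?_
    rw [← mul_assoc, Real.mul_self_sqrt (hd i hi)]
  have e2 : ∑ i ∈ s, (Real.sqrt (d i)) ^ 2 = ∑ i ∈ s, d i := by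
    refine Finset.sum_congr rfl fun i hi => ?_
    exact Real.sq_sqrt (hd i hi)
  have e3 : ∑ i ∈ s, (Real.sqrt (d i) * v i) ^ 2 = ∑ i ∈ s, d i * v i ^ 2 := by
    refine Finset.sum_congr rfl fun i hi => ?_
    rw [mul_pow, Real.sq_sqrt (hd i hi)]
  rw [e1, e2, e3] at h
  exact h

/-- Two saturated weight vectors with bounded second moments have close means. -/
theorem stmt_3 (n : ℕ) (ρ : ℝ) (hρ : ρ ∈ Set.Icc (0 : ℝ) (1 / 4))
    (y : Fin n → ℝ) (w w' : Fin n → ℝ) (σ σ' μ μ' : ℝ) (hσ : 0 ≤ σ) (hσ' : 0 ≤ σ')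
    (hw : ∀ i, 0 ≤ w i ∧ w i ≤ 1 / ((1 - ρ) * n)) (hwsum : ∑ i, w i = 1)
    (hw' : ∀ i, 0 ≤ w' i ∧ w' i ≤ 1 / ((1 - ρ) * n)) (hw'sum : ∑ i, w' i = 1)
    (hμ : μ = ∑ i, w i * y i) (hμ' : μ' = ∑ i, w' i * y i)
    (hvar : ∑ i, w i * (y i - μ) ^ 2 ≤ σ ^ 2)
    (hvar' : ∑ i, w' i * (y i - μ') ^ 2 ≤ σ' ^ 2) :
    |μ - μ'| ≤ 2 * Real.sqrt ρ * (σ + σ') := by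
  obtain ⟨hρ0, hρ4⟩ := hρ
  have hρ1 : (0:ℝ) < 1 - ρ := by linarith
  have hn : (0:ℝ) < n := by
    rcases Nat.eq_zero_or_pos n with h | h
    · subst h; simp at hwsum
    · exact_mod_cast h
  set S : Finset (Fin n) := Finset.univ.filter (fun i => w' i < w i) with hS
  set T : Finset (Fin n) := Finset.univ.filter (fun i => ¬ w' i < w i) with hT
  set ε : ℝ := ∑ i ∈ S, (w i - w' i) with hε
  have hsum0 : ∑ i : Fin n, (w i - w' i) = 0 := by
    rw [Finset.sum_sub_distrib, hwsum, hw'sum]; ring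
  have hsplit : ∀ f : Fin n → ℝ, ∑ i ∈ S, f i + ∑ i ∈ T, f i = ∑ i : Fin n, f i := by
    intro f
    exact Finset.sum_filter_add_sum_filter_not _ _ f
  have hε0 : 0 ≤ ε := by
    apply Finset.sum_nonneg
    intro i hi
    have := (Finset.mem_filter.mp hi).2
    linarith
  have hεT : ∑ i ∈ T, (w' i - w i) = ε := by
    have := hsplit (fun i => w i - w' i)
    rw [hsum0] at this
    have h2 : ∑ i ∈ T, (w' i - w i) = - ∑ i ∈ T, (w i - w' i) := by
      rw [← Finset.sum_neg_distrib]; exact Finset.sum_congr rfl fun i _ => by ring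
    rw [h2]; linarith [this]
  -- bound on ε
  have hεle : ε * (1 - ρ) ≤ ρ := by
    have hb : ∀ i, (0:ℝ) ≤ 1 / ((1 - ρ) * n) - w i := fun i => by linarith [(hw i).2]
    have h1 : ε ≤ ∑ i ∈ T, (1 / ((1 - ρ) * n) - w i) := by
      rw [← hεT]
      apply Finset.sum_le_sum
      intro i hi
      linarith [(hw' i).2]
    have h2 : ∑ i ∈ T, (1 / ((1 - ρ) * n) - w i) ≤ ∑ i : Fin n, (1 / ((1 - ρ) * n) - w i) := by
      rw [← hsplit (fun i => 1 / ((1 - ρ) * n) - w i)]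
      have : 0 ≤ ∑ i ∈ S, (1 / ((1 - ρ) * n) - w i) :=
        Finset.sum_nonneg fun i _ => hb i
      linarith
    have h3 : ∑ i : Fin n, (1 / ((1 - ρ) * n) - w i) = ρ / (1 - ρ) := by
      rw [Finset.sum_sub_distrib, hwsum, Finset.sum_const, Finset.card_univ, Fintype.card_fin, nsmul_eq_mul]
      field_simp
      ring
    have h4 : ε ≤ ρ / (1 - ρ) := by linarith
    calc ε * (1 - ρ) ≤ (ρ / (1 - ρ)) * (1 - ρ) := by
          exact mul_le_mul_of_nonneg_right h4 (le_of_lt hρ1)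
      _ = ρ := by field_simp
  have hεlt1 : ε < 1 := by nlinarith
  -- second moment bounds restricted to S and T
  have hmomS : ∑ i ∈ S, (w i - w' i) * (y i - μ) ^ 2 ≤ σ ^ 2 := by
    calc ∑ i ∈ S, (w i - w' i) * (y i - μ) ^ 2
        ≤ ∑ i ∈ S, w i * (y i - μ) ^ 2 := by
          apply Finset.sum_le_sum; intro i hi
          exact mul_le_mul_of_nonneg_right (by linarith [(hw' i).1]) (sq_nonneg _)
      _ ≤ ∑ i : Fin n, w i * (y i - μ) ^ 2 := by
          apply Finset.sum_le_sum_of_subset_of_nonneg (Finset.subset_univ S)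
          intro i _ _
          exact mul_nonneg (hw i).1 (sq_nonneg _)
      _ ≤ σ ^ 2 := hvar
  have hmomT : ∑ i ∈ T, (w' i - w i) * (y i - μ') ^ 2 ≤ σ' ^ 2 := by
    calc ∑ i ∈ T, (w' i - w i) * (y i - μ') ^ 2
        ≤ ∑ i ∈ T, w' i * (y i - μ') ^ 2 := by
          apply Finset.sum_le_sum; intro i hi
          exact mul_le_mul_of_nonneg_right (by linarith [(hw i).1]) (sq_nonneg _)
      _ ≤ ∑ i : Fin n, w' i * (y i - μ') ^ 2 := by
          apply Finset.sum_le_sum_of_subset_of_nonneg (Finset.subset_univ T)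
          intro i _ _
          exact mul_nonneg (hw' i).1 (sq_nonneg _)
      _ ≤ σ' ^ 2 := hvar'
  set A : ℝ := ∑ i ∈ S, (w i - w' i) * (y i - μ) with hA
  set B : ℝ := ∑ i ∈ T, (w' i - w i) * (y i - μ') with hB
  have hdS : ∀ i ∈ S, 0 ≤ w i - w' i := by
    intro i hi; have := (Finset.mem_filter.mp hi).2; linarith
  have hdT : ∀ i ∈ T, 0 ≤ w' i - w i := by
    intro i hi; have := (Finset.mem_filter.mp hi).2; push_neg at this; linarith
  have hA2 : A ^ 2 ≤ ε * σ ^ 2 := by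
    have := cs_aux S (fun i => w i - w' i) (fun i => y i - μ) hdS
    calc A ^ 2 ≤ ε * ∑ i ∈ S, (w i - w' i) * (y i - μ) ^ 2 := this
      _ ≤ ε * σ ^ 2 := mul_le_mul_of_nonneg_left hmomS hε0
  have hB2 : B ^ 2 ≤ ε * σ' ^ 2 := by
    have := cs_aux T (fun i => w' i - w i) (fun i => y i - μ') hdT
    rw [hεT] at this
    calc B ^ 2 ≤ ε * ∑ i ∈ T, (w' i - w i) * (y i - μ') ^ 2 := this
      _ ≤ ε * σ' ^ 2 := mul_le_mul_of_nonneg_left hmomT hε0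
  have hAabs : |A| ≤ Real.sqrt ε * σ := by
    have h1 : |A| = Real.sqrt (A ^ 2) := (Real.sqrt_sq_eq_abs A).symm
    rw [h1]
    calc Real.sqrt (A ^ 2) ≤ Real.sqrt (ε * σ ^ 2) := Real.sqrt_le_sqrt hA2
      _ = Real.sqrt ε * σ := by
          rw [Real.sqrt_mul hε0, Real.sqrt_sq hσ]
  have hBabs : |B| ≤ Real.sqrt ε * σ' := by
    have h1 : |B| = Real.sqrt (B ^ 2) := (Real.sqrt_sq_eq_abs B).symm
    rw [h1]
    calc Real.sqrt (B ^ 2) ≤ Real.sqrt (ε * σ' ^ 2) := Real.sqrt_le_sqrt hB2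
      _ = Real.sqrt ε * σ' := by
          rw [Real.sqrt_mul hε0, Real.sqrt_sq hσ']
  -- key identity
  have hid : (μ - μ') * (1 - ε) = A - B := by
    have h1 : μ - μ' = ∑ i : Fin n, (w i - w' i) * y i := by
      rw [hμ, hμ', ← Finset.sum_sub_distrib]
      exact Finset.sum_congr rfl fun i _ => by ring
    have h2 : ∑ i : Fin n, (w i - w' i) * y i
        = ∑ i ∈ S, (w i - w' i) * y i + ∑ i ∈ T, (w i - w' i) * y i :=
      (hsplit _).symm
    have h3 : ∑ i ∈ S, (w i - w' i) * y i = A + ε * μ := by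
      rw [hA, hε, Finset.sum_mul, ← Finset.sum_add_distrib]
      exact Finset.sum_congr rfl fun i _ => by ring
    have h4 : ∑ i ∈ T, (w i - w' i) * y i = -B - ε * μ' := by
      have : ∑ i ∈ T, (w' i - w i) * y i = B + ε * μ' := by
        rw [hB, ← hεT, Finset.sum_mul, ← Finset.sum_add_distrib]
        exact Finset.sum_congr rfl fun i _ => by ring
      have h5 : ∑ i ∈ T, (w i - w' i) * y i = - ∑ i ∈ T, (w' i - w i) * y i := by
        rw [← Finset.sum_neg_distrib]
        exact Finset.sum_congr rfl fun i _ => by ring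
      rw [h5, this]; ring
    have := h1
    rw [h2, h3, h4] at this
    linear_combination this
  -- key numeric inequality
  have hsq : Real.sqrt ε ≤ 2 * Real.sqrt ρ * (1 - ε) := by
    have hquad : ε ≤ 4 * ρ * (1 - ε) ^ 2 := by
      nlinarith [sq_nonneg (1 - 4*ρ), sq_nonneg ε, mul_nonneg hρ0 hε0,
        mul_nonneg hε0 hε0, sq_nonneg (ε - ρ)]
    have hrsq : (2 * Real.sqrt ρ * (1 - ε)) ^ 2 = 4 * ρ * (1 - ε) ^ 2 := by
      rw [mul_pow, mul_pow, Real.sq_sqrt hρ0]; ring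
    have hnn : 0 ≤ 2 * Real.sqrt ρ * (1 - ε) := by
      apply mul_nonneg
      · positivity
      · linarith
    calc Real.sqrt ε ≤ Real.sqrt ((2 * Real.sqrt ρ * (1 - ε)) ^ 2) := by
          apply Real.sqrt_le_sqrt; rw [hrsq]; exact hquad
      _ = 2 * Real.sqrt ρ * (1 - ε) := Real.sqrt_sq hnn
  -- combine
  have hmain : |μ - μ'| * (1 - ε) ≤ 2 * Real.sqrt ρ * (σ + σ') * (1 - ε) := by
    have h1 : |μ - μ'| * (1 - ε) = |A - B| := by
      rw [← hid, abs_mul, abs_of_pos (by linarith : (0:ℝ) < 1 - ε)]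
    rw [h1]
    calc |A - B| ≤ |A| + |B| := abs_sub A B
      _ ≤ Real.sqrt ε * σ + Real.sqrt ε * σ' := add_le_add hAabs hBabs
      _ = Real.sqrt ε * (σ + σ') := by ring
      _ ≤ 2 * Real.sqrt ρ * (1 - ε) * (σ + σ') := by
          exact mul_le_mul_of_nonneg_right hsq (by linarith)
      _ = 2 * Real.sqrt ρ * (σ + σ') * (1 - ε) := by ring
  have h1ε : (0:ℝ) < 1 - ε := by linarith
  exact le_of_mul_le_mul_right hmain h1ε
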